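/- Let (𝒮, 𝒜, P*, r, H) be a finite-horizon MDP. Let P̂_h(·|s,a) be arbitrary probability mass functions on 𝒮 for h ∈ {0,…,H−2} and each (s,a), and let b_h(s,a) ≥ 0 be nonnegative reals satisfying b_h(s,a) ≥ ((H−h−1)/2)·‖P̂_h(·|s,a) − P*_h(·|s,a)‖₁ for all 0 ≤ h ≤ H−2 and all (s,a). Define the truncated optimistic value iteration: V̂_H ≡ 0, Q̂_h(s,a) = min{ r_h(s,a) + ∑_{s'} P̂_h(s'|s,a)·V̂_{h+1}(s') + b_h(s,a), H−h } (the sum absent at h = H−1), and V̂_h(s) = max_{a∈𝒜} Q̂_h(s,a). Then for all h ∈ {0,…,H−1} and all (s,a): Q̂_h(s,a) ≥ Q*_h(s,a) and V̂_h(s) ≥ V*_h(s), where Q*, V* are the optimal action-value and value functions of (𝒮,𝒜,P*,r,H). -/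

import Mathlib

/-- A probability mass function on a finite type, as a real-valued function. -/
def IsPMF {S : Type*} [Fintype S] (p : S → ℝ) : Prop :=
  (∀ s, 0 ≤ p s) ∧ ∑ s, p s = 1

/-- ℓ₁ distance between two functions on a finite type. -/
noncomputable def l1dist {S : Type*} [Fintype S] (p q : S → ℝ) : ℝ :=
  ∑ s, |p s - q s|

/-- Value function of a deterministic Markov policy, by backward recursion on the
number `t` of remaining steps; the value at stage `h` with horizon `H` is
`Vpi P r pol (H - h) h`. -/
noncomputable def Vpi {S A : Type*} [Fintype S]
    (P : ℕ → S → A → S → ℝ) (r : ℕ → S → A → ℝ) (pol : ℕ → S → A) :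
    ℕ → ℕ → S → ℝ
  | 0, _, _ => 0
  | t + 1, h, s =>
      r h s (pol h s) + ∑ s' : S, P h s (pol h s) s' * Vpi P r pol t (h + 1) s'

/-- Action-value function of a deterministic Markov policy in the horizon-`H` MDP. -/
noncomputable def Qpi {S A : Type*} [Fintype S]
    (P : ℕ → S → A → S → ℝ) (r : ℕ → S → A → ℝ) (pol : ℕ → S → A)
    (H h : ℕ) (s : S) (a : A) : ℝ :=
  r h s a + ∑ s' : S, P h s a s' * Vpi P r pol (H - (h + 1)) (h + 1) s'

/-- Optimal value function: supremum over all deterministic Markov policies. -/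
noncomputable def Vstar {S A : Type*} [Fintype S]
    (P : ℕ → S → A → S → ℝ) (r : ℕ → S → A → ℝ) (H h : ℕ) (s : S) : ℝ :=
  ⨆ pol : ℕ → S → A, Vpi P r pol (H - h) h s

/-- Optimal action-value function. -/
noncomputable def Qstar {S A : Type*} [Fintype S]
    (P : ℕ → S → A → S → ℝ) (r : ℕ → S → A → ℝ) (H h : ℕ) (s : S) (a : A) : ℝ :=
  r h s a + ∑ s' : S, P h s a s' * Vstar P r H (h + 1) s'

/-- The set of optimal actions `A*_h(s) = argmax_a Q*_h(s,a)`. -/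
def OptActions {S A : Type*} [Fintype S]
    (P : ℕ → S → A → S → ℝ) (r : ℕ → S → A → ℝ) (H h : ℕ) (s : S) : Set A :=
  {a | ∀ a', Qstar P r H h s a' ≤ Qstar P r H h s a}

/-- Truncated optimistic value iteration, by backward recursion on the number `t`
of remaining steps; the optimistic value at stage `h` with horizon `H` is
`VhatAux P r b H (H - h) h`. -/
noncomputable def VhatAux {S A : Type*} [Fintype S] [Fintype A] [Nonempty A]
    (P : ℕ → S → A → S → ℝ) (r b : ℕ → S → A → ℝ) (H : ℕ) :
    ℕ → ℕ → S → ℝ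
  | 0, _, _ => 0
  | t + 1, h, s =>
      ⨆ a : A,
        min (r h s a + (∑ s' : S, P h s a s' * VhatAux P r b H t (h + 1) s') + b h s a)
          ((H : ℝ) - h)

/-- Truncated optimistic action-value function
`Q̂_h(s,a) = min{ r_h(s,a) + ∑_{s'} P̂_h(s'|s,a)·V̂_{h+1}(s') + b_h(s,a), H−h }`. -/
noncomputable def Qhat {S A : Type*} [Fintype S] [Fintype A] [Nonempty A]
    (P : ℕ → S → A → S → ℝ) (r b : ℕ → S → A → ℝ) (H h : ℕ) (s : S) (a : A) : ℝ :=
  min (r h s a + (∑ s' : S, P h s a s' * VhatAux P r b H (H - (h + 1)) (h + 1) s') + b h s a)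
    ((H : ℝ) - h)

/-- Truncated optimistic value function `V̂_h(s) = max_a Q̂_h(s,a)`. -/
noncomputable def Vhat {S A : Type*} [Fintype S] [Fintype A] [Nonempty A]
    (P : ℕ → S → A → S → ℝ) (r b : ℕ → S → A → ℝ) (H h : ℕ) (s : S) : ℝ :=
  VhatAux P r b H (H - h) h s


/-!
Backward induction on the stage `h`, starting from `V̂_H = V*_H = 0`. If `V̂_{h+1} ≥ V*_{h+1}`,
then `Q̂_h ≥ Q*_h`: on the truncation branch because `Q*_h ≤ H - h`, and on the other branch
because `V*_{h+1}` takes values in `[0, H-h-1]`, so after centring it at `(H-h-1)/2` the model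
error `∑ (P̂ - P*) V*_{h+1}` is at most `(H-h-1)/2 · ‖P̂ - P*‖₁ ≤ b_h`. Maximising over actions
then gives `V̂_h ≥ V*_h`, since every policy value is bounded by `Q*_h` at the policy's action.
-/

open Finset

section Expectation

variable {S : Type*} [Fintype S]

theorem sum_mul_le_sum_mul_of_le {p v w : S → ℝ} (hp : ∀ s, 0 ≤ p s) (hvw : ∀ s, v s ≤ w s) :
    ∑ s, p s * v s ≤ ∑ s, p s * w s :=
  sum_le_sum fun s _ => mul_le_mul_of_nonneg_left (hvw s) (hp s)

theorem IsPMF.sum_mul_mem_Icc {p v : S → ℝ} {M : ℝ} (hp : IsPMF p)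
    (hv : ∀ s, v s ∈ Set.Icc 0 M) : ∑ s, p s * v s ∈ Set.Icc 0 M := by
  refine ⟨sum_nonneg fun s _ => mul_nonneg (hp.1 s) (hv s).1, ?_⟩
  calc ∑ s, p s * v s ≤ ∑ s, p s * M := sum_mul_le_sum_mul_of_le hp.1 fun s => (hv s).2
    _ = M := by rw [← sum_mul, hp.2, one_mul]

theorem sum_mul_le_sum_mul_add_l1dist {p q v : S → ℝ} {M : ℝ} (hpq : ∑ s, p s = ∑ s, q s)
    (hv : ∀ s, v s ∈ Set.Icc 0 M) :
    ∑ s, p s * v s ≤ ∑ s, q s * v s + M / 2 * l1dist q p := by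
  have hcentre : ∑ s, (p s - q s) * v s = ∑ s, (p s - q s) * (v s - M / 2) := by
    simp only [mul_sub, sum_sub_distrib, ← sum_mul, hpq, sub_self, zero_mul, sub_zero]
  have hdev : ∀ s, |v s - M / 2| ≤ M / 2 := fun s =>
    abs_le.2 ⟨by linarith [(hv s).1], by linarith [(hv s).2]⟩
  calc ∑ s, p s * v s = ∑ s, q s * v s + ∑ s, (p s - q s) * (v s - M / 2) := by
        rw [← hcentre, ← sum_add_distrib]; exact sum_congr rfl fun s _ => by ring
    _ ≤ ∑ s, q s * v s + ∑ s, |q s - p s| * (M / 2) := by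
        refine (add_le_add_iff_left _).2 (sum_le_sum fun s _ => ?_)
        rw [abs_sub_comm]
        exact (le_abs_self _).trans ((abs_mul _ _).trans_le
          (mul_le_mul_of_nonneg_left (hdev s) (abs_nonneg _)))
    _ = ∑ s, q s * v s + M / 2 * l1dist q p := by rw [l1dist, ← sum_mul, mul_comm]

end Expectation

section TrueMDP

variable {S A : Type*} [Fintype S] {P : ℕ → S → A → S → ℝ} {r : ℕ → S → A → ℝ} {H : ℕ}

@[simp]
theorem Vstar_self (s : S) : Vstar P r H H s = 0 := by
  simp [Vstar, Vpi, Real.iSup_const_zero]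

variable (hP : ∀ h, h + 1 < H → ∀ s a, IsPMF (P h s a))
  (hr : ∀ h, h < H → ∀ s a, r h s a ∈ Set.Icc (0 : ℝ) 1)
include hP hr

theorem Vpi_mem_Icc (pol : ℕ → S → A) {t h : ℕ} (hth : h + t ≤ H) (s : S) :
    Vpi P r pol t h s ∈ Set.Icc (0 : ℝ) t := by
  induction t generalizing h s with
  | zero => simp [Vpi]
  | succ t ih =>
    have hnext : ∑ s', P h s (pol h s) s' * Vpi P r pol t (h + 1) s' ∈ Set.Icc (0 : ℝ) t := by
      rcases t with _ | t
      · simp [Vpi]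
      · exact (hP h (by omega) s _).sum_mul_mem_Icc fun s' => ih (by omega) s'
    have hrh := hr h (by omega) s (pol h s)
    simp only [Vpi, Set.mem_Icc, Nat.cast_succ] at hrh hnext ⊢
    constructor <;> linarith

theorem Vpi_le_Vstar (pol : ℕ → S → A) {h : ℕ} (hh : h ≤ H) (s : S) :
    Vpi P r pol (H - h) h s ≤ Vstar P r H h s :=
  le_ciSup ⟨((H - h : ℕ) : ℝ), by
    rintro _ ⟨pol', rfl⟩
    exact (Vpi_mem_Icc hP hr pol' (t := H - h) (h := h) (by omega) s).2⟩ pol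

theorem Vstar_mem_Icc [Nonempty A] {h : ℕ} (hh : h ≤ H) (s : S) :
    Vstar P r H h s ∈ Set.Icc (0 : ℝ) (H - h) := by
  rw [← Nat.cast_sub hh]
  exact ⟨(Vpi_mem_Icc hP hr (Classical.arbitrary _) (by omega) s).1.trans
      (Vpi_le_Vstar hP hr _ hh s),
    ciSup_le fun pol => (Vpi_mem_Icc hP hr pol (by omega) s).2⟩

theorem Qstar_le_sub [Nonempty A] {h : ℕ} (hh : h < H) (s : S) (a : A) :
    Qstar P r H h s a ≤ H - h := by
  have hnext : ∑ s', P h s a s' * Vstar P r H (h + 1) s' ≤ H - h - 1 := by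
    rcases (show h + 1 ≤ H from hh).eq_or_lt with hlast | hmid
    · simp [← hlast]
    · simpa [sub_sub] using
        ((hP h hmid s a).sum_mul_mem_Icc fun s' => Vstar_mem_Icc hP hr hmid.le s').2
  rw [Qstar]
  linarith [(hr h hh s a).2]

theorem Vpi_le_Qstar {h : ℕ} (hh : h < H) (pol : ℕ → S → A) (s : S) :
    Vpi P r pol (H - h) h s ≤ Qstar P r H h s (pol h s) := by
  rw [show H - h = H - (h + 1) + 1 by omega, Vpi, Qstar, add_le_add_iff_left]
  rcases (show h + 1 ≤ H from hh).eq_or_lt with hlast | hmid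
  · simp [← hlast, Vpi]
  · exact sum_mul_le_sum_mul_of_le (hP h hmid s _).1 fun s' =>
      Vpi_le_Vstar hP hr pol hmid.le s'

theorem Vstar_le_of_forall_Qstar_le [Nonempty A] {h : ℕ} (hh : h < H) {s : S} {c : ℝ}
    (hc : ∀ a, Qstar P r H h s a ≤ c) : Vstar P r H h s ≤ c :=
  ciSup_le fun pol => (Vpi_le_Qstar hP hr hh pol s).trans (hc _)

end TrueMDP

section Optimistic

variable {S A : Type*} [Fintype S] [Fintype A] [Nonempty A]
  {P : ℕ → S → A → S → ℝ} {r b : ℕ → S → A → ℝ} {H : ℕ}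

@[simp]
theorem Vhat_self (s : S) : Vhat P r b H H s = 0 := by
  simp [Vhat, VhatAux]

theorem Vhat_eq_iSup_Qhat {h : ℕ} (hh : h < H) (s : S) :
    Vhat P r b H h s = ⨆ a, Qhat P r b H h s a := by
  rw [Vhat, show H - h = H - (h + 1) + 1 by omega, VhatAux]
  rfl

theorem Qhat_le_Vhat {h : ℕ} (hh : h < H) (s : S) (a : A) :
    Qhat P r b H h s a ≤ Vhat P r b H h s := by
  rw [Vhat_eq_iSup_Qhat hh]
  exact le_ciSup (Set.finite_range _).bddAbove a

end Optimistic

theorem Qstar_le_Qhat_of_Vstar_le_Vhat {S A : Type*} [Fintype S] [Fintype A] [Nonempty A]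
    {Pstar Phat : ℕ → S → A → S → ℝ} {r b : ℕ → S → A → ℝ} {H h : ℕ} (hh : h < H)
    (hPstar : ∀ h, h + 1 < H → ∀ s a, IsPMF (Pstar h s a))
    (hPhat : h + 1 < H → ∀ s a, IsPMF (Phat h s a))
    (hr : ∀ h, h < H → ∀ s a, r h s a ∈ Set.Icc (0 : ℝ) 1)
    (hb0 : ∀ s a, 0 ≤ b h s a)
    (hb : h + 1 < H → ∀ s a,
      ((H : ℝ) - h - 1) / 2 * l1dist (Phat h s a) (Pstar h s a) ≤ b h s a)
    (hV : ∀ s, Vstar Pstar r H (h + 1) s ≤ Vhat Phat r b H (h + 1) s) (s : S) (a : A) :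
    Qstar Pstar r H h s a ≤ Qhat Phat r b H h s a := by
  refine le_min ?_ (Qstar_le_sub hPstar hr hh s a)
  rcases (show h + 1 ≤ H from hh).eq_or_lt with hlast | hmid
  · subst hlast
    simp [Qstar, VhatAux, hb0 s a]
  · have hVstar : ∀ s', Vstar Pstar r H (h + 1) s' ∈ Set.Icc (0 : ℝ) (H - h - 1) := fun s' => by
      simpa [sub_sub] using Vstar_mem_Icc hPstar hr hmid.le s'
    have hsum : ∑ s', Pstar h s a s' = ∑ s', Phat h s a s' := by
      rw [(hPstar h hmid s a).2, (hPhat hmid s a).2]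
    calc Qstar Pstar r H h s a
        ≤ r h s a + (∑ s', Phat h s a s' * Vstar Pstar r H (h + 1) s'
            + ((H : ℝ) - h - 1) / 2 * l1dist (Phat h s a) (Pstar h s a)) :=
          (add_le_add_iff_left _).2 (sum_mul_le_sum_mul_add_l1dist hsum hVstar)
      _ ≤ r h s a + ∑ s', Phat h s a s' * Vhat Phat r b H (h + 1) s' + b h s a := by
          rw [← add_assoc]
          exact add_le_add ((add_le_add_iff_left _).2
            (sum_mul_le_sum_mul_of_le (hPhat hmid s a).1 hV)) (hb hmid s a)

theorem optimism_of_truncated_value_iteration_general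
    {𝒮 𝒜 : Type*} [Fintype 𝒮] [Fintype 𝒜] [Nonempty 𝒜]
    (H : ℕ)
    (Pstar : ℕ → 𝒮 → 𝒜 → 𝒮 → ℝ) (r : ℕ → 𝒮 → 𝒜 → ℝ)
    (Phat : ℕ → 𝒮 → 𝒜 → 𝒮 → ℝ) (b : ℕ → 𝒮 → 𝒜 → ℝ)
    (hPstar : ∀ h, h + 1 < H → ∀ s a, IsPMF (Pstar h s a))
    (hPhat : ∀ h, h + 1 < H → ∀ s a, IsPMF (Phat h s a))
    (hr : ∀ h, h < H → ∀ s a, r h s a ∈ Set.Icc (0 : ℝ) 1)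
    (hb0 : ∀ h, h < H → ∀ s a, 0 ≤ b h s a)
    (hb : ∀ h, h + 1 < H → ∀ s a,
      ((H : ℝ) - h - 1) / 2 * l1dist (Phat h s a) (Pstar h s a) ≤ b h s a) :
    ∀ h, h < H → ∀ s a,
      Qstar Pstar r H h s a ≤ Qhat Phat r b H h s a ∧
      Vstar Pstar r H h s ≤ Vhat Phat r b H h s := by
  have hQ : ∀ h (hh : h < H), (∀ s, Vstar Pstar r H (h + 1) s ≤ Vhat Phat r b H (h + 1) s) →
      ∀ s a, Qstar Pstar r H h s a ≤ Qhat Phat r b H h s a := fun h hh hV =>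
    Qstar_le_Qhat_of_Vstar_le_Vhat hh hPstar (hPhat h) hr (hb0 h hh) (hb h) hV
  have hV : ∀ h ≤ H, ∀ s, Vstar Pstar r H h s ≤ Vhat Phat r b H h s := by
    intro h hh
    induction hh using Nat.decreasingInduction with
    | self => simp
    | of_succ h hh ih =>
      exact fun s => Vstar_le_of_forall_Qstar_le hPstar hr hh fun a =>
        (hQ h hh ih s a).trans (Qhat_le_Vhat hh s a)
  intro h hh s a
  exact ⟨hQ h hh (hV (h + 1) hh) s a, hV h hh.le s⟩

/-- optimism of truncated UCB value iteration.
If the bonuses dominate half the span times the ℓ₁ model error, then the truncated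
optimistic value iteration upper-bounds the optimal values of the true MDP. -/
theorem optimism_of_truncated_value_iteration
    {𝒮 𝒜 : Type*} [Fintype 𝒮] [Fintype 𝒜] [Nonempty 𝒮] [Nonempty 𝒜]
    (H : ℕ) (hH : 1 ≤ H)
    (Pstar : ℕ → 𝒮 → 𝒜 → 𝒮 → ℝ) (r : ℕ → 𝒮 → 𝒜 → ℝ)
    (Phat : ℕ → 𝒮 → 𝒜 → 𝒮 → ℝ) (b : ℕ → 𝒮 → 𝒜 → ℝ)
    (hPstar : ∀ h, h + 1 < H → ∀ s a, IsPMF (Pstar h s a))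
    (hPhat : ∀ h, h + 1 < H → ∀ s a, IsPMF (Phat h s a))
    (hr : ∀ h, h < H → ∀ s a, r h s a ∈ Set.Icc (0 : ℝ) 1)
    (hb0 : ∀ h, h < H → ∀ s a, 0 ≤ b h s a)
    (hb : ∀ h, h + 1 < H → ∀ s a,
      ((H : ℝ) - h - 1) / 2 * l1dist (Phat h s a) (Pstar h s a) ≤ b h s a) :
    ∀ h, h < H → ∀ s a,
      Qstar Pstar r H h s a ≤ Qhat Phat r b H h s a ∧
      Vstar Pstar r H h s ≤ Vhat Phat r b H h s :=
  optimism_of_truncated_value_iteration_general H Pstar r Phat b hPstar hPhat hr hb0 hb
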